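/- Let α be a finite set with |α| = q, let f₊ and f₋ be pmfs on α with H(f₊‖f₋) > 0, and let M ≥ 1 be a natural number. Let A be the empirical distribution of M i.i.d. samples from f₋, and let B, C, D each be the empirical distribution of M i.i.d. samples from f₊, where all four samples are mutually independent (i.e., the underlying law is the product of the corresponding product pmfs). Then Pr( H(A‖B) ≤ H(C‖D) ) ≤ 4·(M+1)^{q} · exp(−M·H²(f₊‖f₋)/32). -/

import Mathlib

/-!
If `H(A‖B) ≤ H(C‖D)`, the triangle inequality for the Hellinger distance (the Euclidean distance
between the vectors `(√f(a) / √2)ₐ`) forces one of the four empirical distributions to lie at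
distance at least `H(f₊‖f₋) / 4` from the law it was sampled from. By the method of types each of
these four events has probability at most `(M + 1)^q · exp(-2M · H²(f₊‖f₋) / 16)`: a sample `x`
has probability `∏ f(xᵢ) ≤ ∏ p̂ₓ(xᵢ) · exp(-2M · H²(p̂ₓ‖f))` because `KL ≥ 2H²`, the samples
sharing an empirical distribution `t` have total `t`-probability at most `1`, and there are at most
`(M + 1)^q` empirical distributions.
-/

open Finset

/-- `p` is a probability mass function on the finite type `α`. -/
def IsPmf {α : Type*} [Fintype α] (p : α → ℝ) : Prop :=
  (∀ a, 0 ≤ p a) ∧ ∑ a, p a = 1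

/-- Squared Hellinger divergence between pmfs on a finite type. -/
noncomputable def hellingerSq {α : Type*} [Fintype α] (p q : α → ℝ) : ℝ :=
  (1 / 2) * ∑ a, (Real.sqrt (p a) - Real.sqrt (q a)) ^ 2

/-- Hellinger distance between pmfs on a finite type. -/
noncomputable def hellinger {α : Type*} [Fintype α] (p q : α → ℝ) : ℝ :=
  Real.sqrt (hellingerSq p q)

/-- Empirical distribution of the sample `x = (x₁, …, x_M)`. -/
noncomputable def empDist {α : Type*} [Fintype α] [DecidableEq α] {M : ℕ}
    (x : Fin M → α) (a : α) : ℝ :=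
  ((Finset.univ.filter fun i => x i = a).card : ℝ) / M

section Hellinger

variable {α : Type*} [Fintype α]

theorem hellingerSq_nonneg (p q : α → ℝ) : 0 ≤ hellingerSq p q := by
  unfold hellingerSq; positivity

noncomputable def hellingerEmbedding (p : α → ℝ) : EuclideanSpace ℝ α :=
  WithLp.toLp 2 fun a => √(p a) / √2

theorem hellinger_eq_dist (p q : α → ℝ) :
    hellinger p q = dist (hellingerEmbedding p) (hellingerEmbedding q) := by
  rw [EuclideanSpace.dist_eq, hellinger, hellingerSq, Finset.mul_sum]
  congr 1
  refine Finset.sum_congr rfl fun a _ => ?_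
  simp only [hellingerEmbedding, Real.dist_eq, sq_abs, div_sub_div_same, div_pow,
    Real.sq_sqrt zero_le_two]
  ring

theorem dist_le_add_of_dist_le_dist {E : Type*} [PseudoMetricSpace E] {p m a b c d : E}
    (h : dist a b ≤ dist c d) : dist p m ≤ dist a m + dist b p + dist c p + dist d p := by
  have hpm := dist_triangle4 p b a m
  have hcd := dist_triangle c p d
  rw [dist_comm b a, dist_comm p b] at hpm
  rw [dist_comm p d] at hcd
  linarith

theorem hellinger_le_add_of_hellinger_le_hellinger {p m a b c d : α → ℝ}
    (h : hellinger a b ≤ hellinger c d) :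
    hellinger p m ≤ hellinger a m + hellinger b p + hellinger c p + hellinger d p := by
  simp only [hellinger_eq_dist] at h ⊢
  exact dist_le_add_of_dist_le_dist h

theorem hellingerSq_eq_one_sub_sum_sqrt_mul {p q : α → ℝ} (hp : IsPmf p) (hq : IsPmf q) :
    hellingerSq p q = 1 - ∑ a, √(p a * q a) := by
  have hterm : ∀ a, (√(p a) - √(q a)) ^ 2 = p a + q a - 2 * √(p a * q a) := fun a => by
    rw [sub_sq, Real.sq_sqrt (hp.1 a), Real.sq_sqrt (hq.1 a), Real.sqrt_mul (hp.1 a)]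
    ring
  simp only [hellingerSq, hterm, Finset.sum_sub_distrib, Finset.sum_add_distrib, hp.2, hq.2,
    ← Finset.mul_sum]
  ring

end Hellinger

/-- This is `log t ≤ 2 (√t - 1)`, the pointwise form of `KL ≥ 2 H²`. -/
theorem le_mul_exp_two_mul_sqrt_div_sub_one {a b : ℝ} (ha : 0 ≤ a) (hb : 0 < b) :
    a ≤ b * Real.exp (2 * (√(a / b) - 1)) := by
  have ht : √(a / b) ≤ Real.exp (√(a / b) - 1) := by
    simpa using Real.add_one_le_exp (√(a / b) - 1)
  calc a = b * √(a / b) ^ 2 := by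
        rw [Real.sq_sqrt (div_nonneg ha hb.le), mul_div_cancel₀ _ hb.ne']
    _ ≤ b * Real.exp (√(a / b) - 1) ^ 2 := by gcongr
    _ = b * Real.exp (2 * (√(a / b) - 1)) := by rw [← Real.exp_nat_mul]; norm_num

theorem mul_sqrt_div_self {a b : ℝ} (hb : 0 ≤ b) : b * √(a / b) = √(b * a) := by
  rcases hb.eq_or_lt with rfl | hb
  · simp
  rw [Real.sqrt_div' _ hb.le, Real.sqrt_mul hb.le, mul_div_assoc', mul_comm,
    mul_div_assoc, Real.div_sqrt, mul_comm]

section ProductPmf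

variable {α : Type*} [Fintype α] {M : ℕ}

theorem sum_prod_eq_one {p : α → ℝ} (hp : IsPmf p) :
    ∑ x : Fin M → α, ∏ i, p (x i) = 1 := by
  rw [← Fintype.sum_pow, hp.2, one_pow]

theorem sum_prod_le_one {p : α → ℝ} (hp : IsPmf p) (S : Finset (Fin M → α)) :
    ∑ x ∈ S, ∏ i, p (x i) ≤ 1 :=
  (Finset.sum_le_univ_sum_of_nonneg fun _ => Finset.prod_nonneg fun _ _ => hp.1 _).trans_eq
    (sum_prod_eq_one hp)

end ProductPmf

section EmpiricalDistribution

variable {α : Type*} [Fintype α] [DecidableEq α] {M : ℕ}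

theorem empDist_nonneg (x : Fin M → α) (a : α) : 0 ≤ empDist x a := by
  unfold empDist; positivity

theorem empDist_apply_pos (hM : 0 < M) (x : Fin M → α) (i : Fin M) : 0 < empDist x (x i) :=
  div_pos (Nat.cast_pos.mpr (Finset.card_pos.mpr ⟨i, by simp⟩)) (Nat.cast_pos.mpr hM)

theorem sum_comp_eq_mul_sum_empDist (hM : 0 < M) (x : Fin M → α) (g : α → ℝ) :
    ∑ i, g (x i) = M * ∑ a, empDist x a * g a := by
  rw [← Finset.sum_fiberwise' univ x g, Finset.mul_sum]
  refine Finset.sum_congr rfl fun a _ => ?_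
  rw [Finset.sum_const, nsmul_eq_mul, empDist, ← mul_assoc,
    mul_div_cancel₀ _ (Nat.cast_ne_zero.mpr hM.ne')]

theorem isPmf_empDist (hM : 0 < M) (x : Fin M → α) : IsPmf (empDist x) := by
  refine ⟨empDist_nonneg x, ?_⟩
  have h := sum_comp_eq_mul_sum_empDist hM x fun _ => (1 : ℝ)
  simp only [Finset.sum_const, Finset.card_univ, Fintype.card_fin, nsmul_eq_mul, mul_one] at h
  exact (mul_eq_left₀ (Nat.cast_ne_zero.mpr hM.ne')).mp h.symm

noncomputable def empDistRange (α : Type*) [Fintype α] [DecidableEq α] (M : ℕ) :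
    Finset (α → ℝ) :=
  Fintype.piFinset fun _ => (Finset.range (M + 1)).image fun k : ℕ => (k : ℝ) / M

theorem empDist_mem_empDistRange (x : Fin M → α) : empDist x ∈ empDistRange α M := by
  refine Fintype.mem_piFinset.mpr fun a => Finset.mem_image.mpr ⟨_, ?_, rfl⟩
  have := Finset.card_filter_le univ fun i => x i = a
  rw [Finset.card_univ, Fintype.card_fin] at this
  exact Finset.mem_range.mpr (Nat.lt_succ_of_le this)

theorem card_empDistRange_le : (empDistRange α M).card ≤ (M + 1) ^ Fintype.card α := by
  rw [empDistRange, Fintype.card_piFinset]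
  calc ∏ _a : α, ((Finset.range (M + 1)).image fun k : ℕ => (k : ℝ) / M).card
      ≤ ∏ _a : α, (M + 1) :=
        Finset.prod_le_prod' fun _ _ => (Finset.card_image_le).trans_eq (Finset.card_range _)
    _ = (M + 1) ^ Fintype.card α := by rw [Finset.prod_const, Finset.card_univ]

end EmpiricalDistribution

section Concentration

variable {α : Type*} [Fintype α] [DecidableEq α] {M : ℕ} {p : α → ℝ}

theorem prod_le_prod_empDist_mul_exp (hp : IsPmf p) (hM : 0 < M) (x : Fin M → α) :
    ∏ i, p (x i) ≤
      (∏ i, empDist x (x i)) * Real.exp (-(2 * M * hellingerSq (empDist x) p)) := by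
  have hexponent : ∑ i, 2 * (√(p (x i) / empDist x (x i)) - 1) =
      -(2 * M * hellingerSq (empDist x) p) := by
    rw [sum_comp_eq_mul_sum_empDist hM x fun a => 2 * (√(p a / empDist x a) - 1),
      hellingerSq_eq_one_sub_sum_sqrt_mul (isPmf_empDist hM x) hp]
    have hsum : ∑ a, empDist x a * (2 * (√(p a / empDist x a) - 1)) =
        2 * ∑ a, √(empDist x a * p a) - 2 * ∑ a, empDist x a := by
      simp only [Finset.mul_sum, ← Finset.sum_sub_distrib]
      refine Finset.sum_congr rfl fun a _ => ?_
      rw [← mul_sqrt_div_self (empDist_nonneg x a)]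
      ring
    rw [hsum, (isPmf_empDist hM x).2]
    ring
  calc ∏ i, p (x i)
      ≤ ∏ i, empDist x (x i) * Real.exp (2 * (√(p (x i) / empDist x (x i)) - 1)) :=
        Finset.prod_le_prod (fun i _ => hp.1 _) fun i _ =>
          le_mul_exp_two_mul_sqrt_div_sub_one (hp.1 _) (empDist_apply_pos hM x i)
    _ = _ := by rw [Finset.prod_mul_distrib, ← Real.exp_sum, hexponent]

theorem indicator_le_prod_empDist_mul_exp (hp : IsPmf p) (hM : 0 < M) {r : ℝ} (hr : 0 ≤ r)
    (x : Fin M → α) :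
    {x : Fin M → α | r ≤ hellinger (empDist x) p}.indicator (fun x => ∏ i, p (x i)) x ≤
      (∏ i, empDist x (x i)) * Real.exp (-(2 * M * r ^ 2)) := by
  refine Set.indicator_apply_le' (fun hx => (prod_le_prod_empDist_mul_exp hp hM x).trans ?_)
    fun _ => mul_nonneg (Finset.prod_nonneg fun i _ => empDist_nonneg x _) (Real.exp_nonneg _)
  have hr2 : r ^ 2 ≤ hellingerSq (empDist x) p :=
    (Real.le_sqrt hr (hellingerSq_nonneg _ _)).mp hx
  gcongr
  exact Finset.prod_nonneg fun i _ => empDist_nonneg x _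

theorem sum_empDist_eq_indicator_le (hp : IsPmf p) (hM : 0 < M) {r : ℝ} (hr : 0 ≤ r)
    (t : α → ℝ) :
    ∑ x ∈ univ.filter (fun x : Fin M → α => empDist x = t),
        {x : Fin M → α | r ≤ hellinger (empDist x) p}.indicator (fun x => ∏ i, p (x i)) x ≤
      Real.exp (-(2 * M * r ^ 2)) := by
  rcases (univ.filter fun x : Fin M → α => empDist x = t).eq_empty_or_nonempty with h | ⟨x₀, hx₀⟩
  · rw [h, Finset.sum_empty]
    positivity
  obtain rfl : empDist x₀ = t := (Finset.mem_filter.mp hx₀).2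
  calc _ ≤ ∑ x ∈ univ.filter (fun x : Fin M → α => empDist x = empDist x₀),
          (∏ i, empDist x₀ (x i)) * Real.exp (-(2 * M * r ^ 2)) := by
        refine Finset.sum_le_sum fun x hx => ?_
        rw [← (Finset.mem_filter.mp hx).2]
        exact indicator_le_prod_empDist_mul_exp hp hM hr x
    _ ≤ 1 * Real.exp (-(2 * M * r ^ 2)) := by
        rw [← Finset.sum_mul]
        gcongr
        exact sum_prod_le_one (isPmf_empDist hM x₀) _
    _ = _ := one_mul _

theorem sum_indicator_hellinger_empDist_ge_le (hp : IsPmf p) (hM : 0 < M) {r : ℝ} (hr : 0 ≤ r) :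
    ∑ x : Fin M → α,
        {x : Fin M → α | r ≤ hellinger (empDist x) p}.indicator (fun x => ∏ i, p (x i)) x ≤
      ((M : ℝ) + 1) ^ Fintype.card α * Real.exp (-(2 * M * r ^ 2)) := by
  rw [← Finset.sum_fiberwise_of_maps_to fun x _ => empDist_mem_empDistRange x]
  calc _ ≤ ∑ _t ∈ empDistRange α M, Real.exp (-(2 * M * r ^ 2)) :=
        Finset.sum_le_sum fun t _ => sum_empDist_eq_indicator_le hp hM hr t
    _ ≤ _ := by
        rw [Finset.sum_const, nsmul_eq_mul]
        gcongr
        exact_mod_cast card_empDistRange_le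

end Concentration

theorem sum_indicator_prod_le_union_bound {β : Type*} [Fintype β] {f₁ f₂ f₃ f₄ : β → ℝ}
    (h₁ : 0 ≤ f₁) (h₂ : 0 ≤ f₂) (h₃ : 0 ≤ f₃) (h₄ : 0 ≤ f₄) (E : Set (β × β × β × β))
    (S₁ S₂ S₃ S₄ : Set β)
    (hE : ∀ t ∈ E, t.1 ∈ S₁ ∨ t.2.1 ∈ S₂ ∨ t.2.2.1 ∈ S₃ ∨ t.2.2.2 ∈ S₄) :
    ∑ w, ∑ x, ∑ y, ∑ z,
        E.indicator (fun t => f₁ t.1 * f₂ t.2.1 * f₃ t.2.2.1 * f₄ t.2.2.2) (w, x, y, z) ≤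
      (∑ w, S₁.indicator f₁ w) * (∑ x, f₂ x) * (∑ y, f₃ y) * (∑ z, f₄ z) +
      (∑ w, f₁ w) * (∑ x, S₂.indicator f₂ x) * (∑ y, f₃ y) * (∑ z, f₄ z) +
      (∑ w, f₁ w) * (∑ x, f₂ x) * (∑ y, S₃.indicator f₃ y) * (∑ z, f₄ z) +
      (∑ w, f₁ w) * (∑ x, f₂ x) * (∑ y, f₃ y) * (∑ z, S₄.indicator f₄ z) := by
  have hpointwise : ∀ w x y z,
      E.indicator (fun t => f₁ t.1 * f₂ t.2.1 * f₃ t.2.2.1 * f₄ t.2.2.2) (w, x, y, z) ≤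
        S₁.indicator f₁ w * f₂ x * f₃ y * f₄ z + f₁ w * S₂.indicator f₂ x * f₃ y * f₄ z +
        f₁ w * f₂ x * S₃.indicator f₃ y * f₄ z + f₁ w * f₂ x * f₃ y * S₄.indicator f₄ z := by
    intro w x y z
    have T₁ := mul_nonneg (mul_nonneg (mul_nonneg
      (Set.indicator_nonneg (fun a _ => h₁ a) w : 0 ≤ S₁.indicator f₁ w) (h₂ x)) (h₃ y)) (h₄ z)
    have T₂ := mul_nonneg (mul_nonneg (mul_nonneg (h₁ w)
      (Set.indicator_nonneg (fun a _ => h₂ a) x : 0 ≤ S₂.indicator f₂ x)) (h₃ y)) (h₄ z)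
    have T₃ := mul_nonneg (mul_nonneg (mul_nonneg (h₁ w) (h₂ x))
      (Set.indicator_nonneg (fun a _ => h₃ a) y : 0 ≤ S₃.indicator f₃ y)) (h₄ z)
    have T₄ := mul_nonneg (mul_nonneg (mul_nonneg (h₁ w) (h₂ x)) (h₃ y))
      (Set.indicator_nonneg (fun a _ => h₄ a) z : 0 ≤ S₄.indicator f₄ z)
    refine Set.indicator_apply_le' (fun ht => ?_) fun _ => by linarith
    rcases hE _ ht with h | h | h | h <;> rw [Set.indicator_of_mem h] <;> dsimp only <;> linarith
  calc _ ≤ ∑ w, ∑ x, ∑ y, ∑ z,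
          (S₁.indicator f₁ w * f₂ x * f₃ y * f₄ z + f₁ w * S₂.indicator f₂ x * f₃ y * f₄ z +
          f₁ w * f₂ x * S₃.indicator f₃ y * f₄ z + f₁ w * f₂ x * f₃ y * S₄.indicator f₄ z) := by
        gcongr with w _ x _ y _ z _
        exact hpointwise w x y z
    _ = _ := by simp only [Finset.sum_add_distrib, ← Finset.sum_mul, ← Finset.mul_sum]

theorem prob_membership_swap_general {α : Type*} [Fintype α] [DecidableEq α]
    (fP fM : α → ℝ) (hfP : IsPmf fP) (hfM : IsPmf fM)
    (M : ℕ) (hM : 1 ≤ M) :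
    (∑ w : Fin M → α, ∑ x : Fin M → α, ∑ y : Fin M → α, ∑ z : Fin M → α,
        Set.indicator
          {t : (Fin M → α) × (Fin M → α) × (Fin M → α) × (Fin M → α) |
            hellinger (empDist t.1) (empDist t.2.1) ≤
              hellinger (empDist t.2.2.1) (empDist t.2.2.2)}
          (fun t => (∏ i, fM (t.1 i)) * (∏ i, fP (t.2.1 i)) *
            (∏ i, fP (t.2.2.1 i)) * (∏ i, fP (t.2.2.2 i)))
          (w, x, y, z)) ≤
      4 * ((M : ℝ) + 1) ^ (Fintype.card α) *
        Real.exp (-(M : ℝ) * hellingerSq fP fM / 32) := by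
  set r := hellinger fP fM / 4 with hr_def
  have hr : 0 ≤ r := div_nonneg (Real.sqrt_nonneg _) zero_le_four
  have hfar : ∀ p, IsPmf p → ∑ x : Fin M → α,
      {x : Fin M → α | r ≤ hellinger (empDist x) p}.indicator (fun x => ∏ i, p (x i)) x ≤
        ((M : ℝ) + 1) ^ Fintype.card α * Real.exp (-(M : ℝ) * hellingerSq fP fM / 32) := by
    intro p hp
    refine (sum_indicator_hellinger_empDist_ge_le hp hM hr).trans ?_
    have hr2 : r ^ 2 = hellingerSq fP fM / 16 := by
      rw [div_pow, hellinger, Real.sq_sqrt (hellingerSq_nonneg _ _)]; norm_num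
    have := hellingerSq_nonneg fP fM
    gcongr
    rw [hr2]
    nlinarith
  have hprod_nonneg : ∀ p : α → ℝ, IsPmf p → 0 ≤ fun x : Fin M → α => ∏ i, p (x i) :=
    fun p hp x => Finset.prod_nonneg fun i _ => hp.1 _
  calc _ ≤ _ := sum_indicator_prod_le_union_bound (hprod_nonneg fM hfM) (hprod_nonneg fP hfP)
        (hprod_nonneg fP hfP) (hprod_nonneg fP hfP) _
        {w | r ≤ hellinger (empDist w) fM} {x | r ≤ hellinger (empDist x) fP}
        {y | r ≤ hellinger (empDist y) fP} {z | r ≤ hellinger (empDist z) fP}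
        fun t ht => by
          have := hellinger_le_add_of_hellinger_le_hellinger (p := fP) (m := fM) ht
          by_contra! h
          simp only [Set.mem_ofPred_eq, not_le] at h
          linarith [h.1, h.2.1, h.2.2.1, h.2.2.2]
    _ ≤ _ := by
        simp only [sum_prod_eq_one hfP, sum_prod_eq_one hfM, mul_one, one_mul]
        linarith [hfar fM hfM, hfar fP hfP]

/-- Probabilistic core of the membership lemma: let `A` be the empirical distribution of
`M` i.i.d. samples from `f₋` and let `B, C, D` each be the empirical distribution of `M`
i.i.d. samples from `f₊`, all four samples mutually independent (so the underlying law is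
the product of the corresponding product pmfs on `α^M`). Then
`Pr(H(A‖B) ≤ H(C‖D)) ≤ 4·(M+1)^{|α|} · exp(−M·H²(f₊‖f₋)/32)`. -/
theorem prob_membership_swap {α : Type*} [Fintype α] [DecidableEq α]
    (fP fM : α → ℝ) (hfP : IsPmf fP) (hfM : IsPmf fM)
    (hH : 0 < hellinger fP fM) (M : ℕ) (hM : 1 ≤ M) :
    (∑ w : Fin M → α, ∑ x : Fin M → α, ∑ y : Fin M → α, ∑ z : Fin M → α,
        Set.indicator
          {t : (Fin M → α) × (Fin M → α) × (Fin M → α) × (Fin M → α) |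
            hellinger (empDist t.1) (empDist t.2.1) ≤
              hellinger (empDist t.2.2.1) (empDist t.2.2.2)}
          (fun t => (∏ i, fM (t.1 i)) * (∏ i, fP (t.2.1 i)) *
            (∏ i, fP (t.2.2.1 i)) * (∏ i, fP (t.2.2.2 i)))
          (w, x, y, z)) ≤
      4 * ((M : ℝ) + 1) ^ (Fintype.card α) *
        Real.exp (-(M : ℝ) * hellingerSq fP fM / 32) :=
  prob_membership_swap_general fP fM hfP hfM M hM
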